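/- Let k be a field, d an even integer with d ≥ 4, and m an integer with d+1 < m; set a = (d+2)/2. Let σ : k[x_1,…,x_{m−1}] → k[x_1,…,x_m,z] be the k-algebra homomorphism with σ(x_i) = x_{i+1} for 1 ≤ i ≤ m−2 and σ(x_{m−1}) = z. Then the ideal of k[x_1,…,x_m,z] generated by the image σ(I_{a−1,1,m−2} + I_{a−1,2,m−1}) equals I_{a−1,2,m−1} + z·I_{a−2,3,m−2}; that is, the unprojection ideal J_{d,m} is the image of the Stanley–Reisner ideal of Δ(d−2,m−1) under this change of variables. -/

import Mathlib

/-!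
The map `σ` shifts indices by one and sends the last variable `x_{m-1}` to `z`. A generator
`x_{t_1} ⋯ x_{t_{a-1}}` of the Stanley–Reisner ideal either avoids `x_{m-1}`, and then maps to a
generator of `I_{a-1,2,m-1}`, or ends in `x_{m-1}`, and then maps to `z` times a shifted generator
of length `a - 2`; the gap condition forces its remaining indices into `[2, m-3]`, hence their
shifts into `[3, m-2]`. Conversely, every generator of the right-hand side is reached by shifting
its indices back and, for the `z`-part, appending `x_{m-1}`.
-/

/-- The variable `x_t` (1-indexed, for `1 ≤ t ≤ n`) of the polynomial ring
`k[x_1, …, x_n]`, realized as `MvPolynomial (Fin n) k`. -/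
noncomputable def Xv (k : Type*) [Field k] (n t : ℕ) : MvPolynomial (Fin n) k :=
  if h : 1 ≤ t ∧ t ≤ n then MvPolynomial.X ⟨t - 1, by omega⟩ else 0

/-- The ideal `I_{a,p,q}` of `k[x_1, …, x_n]`, generated by the squarefree monomials
`x_{t_1} ⋯ x_{t_a}` with `p ≤ t_1 < t_2 < ⋯ < t_a ≤ q` and `t_{j+1} ≥ t_j + 2`. -/
noncomputable def idealI (k : Type*) [Field k] (n a p q : ℕ) :
    Ideal (MvPolynomial (Fin n) k) :=
  Ideal.span { f | ∃ t : ℕ → ℕ, p ≤ t 0 ∧ t (a - 1) ≤ q ∧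
    (∀ j, j + 1 < a → t j + 2 ≤ t (j + 1)) ∧
    f = ∏ j ∈ Finset.range a, Xv k n (t j) }

open MvPolynomial Finset

/-- The index sequences of the generators of `idealI k n a p q`; only `t 0, …, t (a - 1)`
matter. -/
def IsSparseSeq (a p q : ℕ) (t : ℕ → ℕ) : Prop :=
  p ≤ t 0 ∧ t (a - 1) ≤ q ∧ ∀ j, j + 1 < a → t j + 2 ≤ t (j + 1)

namespace IsSparseSeq

variable {a p q : ℕ} {t : ℕ → ℕ}

lemma add_two_mul_le (ht : IsSparseSeq a p q t) {i j : ℕ} (hij : i ≤ j) (hj : j < a) :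
    t i + 2 * (j - i) ≤ t j := by
  induction j, hij using Nat.le_induction with
  | base => simp
  | succ j hij ih =>
    have hstep := ht.2.2 j hj
    have hprev := ih (by omega)
    omega

lemma mem_Icc (ht : IsSparseSeq a p q t) {j : ℕ} (hj : j < a) : t j ∈ Set.Icc p q := by
  have hfirst := ht.add_two_mul_le (Nat.zero_le j) hj
  have hlast := ht.add_two_mul_le (show j ≤ a - 1 by omega) (by omega)
  exact ⟨by have := ht.1; omega, by have := ht.2.1; omega⟩

lemma le (ht : IsSparseSeq a p q t) : p ≤ q := by
  rcases Nat.eq_zero_or_pos a with rfl | ha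
  · exact ht.1.trans ht.2.1
  · exact (ht.mem_Icc ha).1.trans (ht.mem_Icc ha).2

lemma mono (ht : IsSparseSeq a p q t) {p' q' : ℕ} (hp : p' ≤ p) (hq : q ≤ q') :
    IsSparseSeq a p' q' t :=
  ⟨hp.trans ht.1, ht.2.1.trans hq, ht.2.2⟩

lemma add_one (ht : IsSparseSeq a p q t) : IsSparseSeq a (p + 1) (q + 1) (fun j => t j + 1) :=
  ⟨Nat.add_le_add_right ht.1 1, Nat.add_le_add_right ht.2.1 1,
    fun j hj => Nat.add_le_add_right (ht.2.2 j hj) 1⟩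

lemma sub_one (ht : IsSparseSeq a (p + 1) (q + 1) t) : IsSparseSeq a p q (fun j => t j - 1) := by
  refine ⟨?_, ?_, fun j hj => ?_⟩ <;> dsimp only
  · have := ht.1; omega
  · have := ht.2.1; omega
  · have hgap := ht.2.2 j hj
    obtain ⟨hpos, -⟩ := ht.mem_Icc (j := j) (by omega)
    omega

lemma of_succ (ht : IsSparseSeq (a + 1) p q t) (ha : 1 ≤ a) : IsSparseSeq a p (q - 2) t := by
  refine ⟨ht.1, ?_, fun j hj => ht.2.2 j (by omega)⟩
  have hgap := ht.2.2 (a - 1) (by omega)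
  have hlast := ht.2.1
  rw [Nat.sub_add_cancel ha] at hgap
  rw [Nat.add_sub_cancel] at hlast
  omega

lemma update (ht : IsSparseSeq a p q t) (ha : 1 ≤ a) {r : ℕ} (hr : q + 2 ≤ r) :
    IsSparseSeq (a + 1) p r (Function.update t a r) := by
  refine ⟨?_, by simp, fun j hj => ?_⟩
  · rw [Function.update_of_ne (by omega)]
    exact ht.1
  · rw [Function.update_of_ne (by omega)]
    rcases Nat.lt_or_ge (j + 1) a with hj' | hj'
    · rw [Function.update_of_ne (by omega)]
      exact ht.2.2 j hj'
    · obtain rfl : a = j + 1 := by omega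
      have hlast := ht.2.1
      rw [Nat.add_sub_cancel] at hlast
      rw [Function.update_self]
      omega

end IsSparseSeq

noncomputable def prodXv (k : Type*) [Field k] (n a : ℕ) (t : ℕ → ℕ) :
    MvPolynomial (Fin n) k :=
  ∏ j ∈ range a, Xv k n (t j)

section Monomials

variable {k : Type*} [Field k]

lemma Xv_eq_X {n t : ℕ} (h1 : 1 ≤ t) (h2 : t ≤ n) :
    Xv k n t = X ⟨t - 1, by omega⟩ := by
  rw [Xv, dif_pos ⟨h1, h2⟩]

lemma prodXv_succ (n a : ℕ) (t : ℕ → ℕ) :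
    prodXv k n (a + 1) t = prodXv k n a t * Xv k n (t a) :=
  prod_range_succ _ _

lemma prodXv_congr {n a : ℕ} {t t' : ℕ → ℕ} (h : ∀ j < a, t j = t' j) :
    prodXv k n a t = prodXv k n a t' :=
  prod_congr rfl fun j hj => by rw [h j (mem_range.1 hj)]

lemma prodXv_mem_idealI {n a p q : ℕ} {t : ℕ → ℕ} (ht : IsSparseSeq a p q t) :
    prodXv k n a t ∈ idealI k n a p q :=
  Ideal.subset_span ⟨t, ht.1, ht.2.1, ht.2.2, rfl⟩

lemma idealI_le_iff {n a p q : ℕ} {J : Ideal (MvPolynomial (Fin n) k)} :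
    idealI k n a p q ≤ J ↔ ∀ t, IsSparseSeq a p q t → prodXv k n a t ∈ J := by
  refine ⟨fun h t ht => h (prodXv_mem_idealI ht), fun h => Ideal.span_le.2 ?_⟩
  rintro _ ⟨t, h0, h1, h2, rfl⟩
  exact h t ⟨h0, h1, h2⟩

section Shift

variable {n N : ℕ} {F : Type*} [FunLike F (MvPolynomial (Fin n) k) (MvPolynomial (Fin N) k)]
  [RingHomClass F (MvPolynomial (Fin n) k) (MvPolynomial (Fin N) k)] {σ : F}

lemma map_prodXv (hσ : ∀ t, 1 ≤ t → t < n → σ (Xv k n t) = Xv k N (t + 1)) {a : ℕ}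
    {t : ℕ → ℕ} (ht : ∀ j < a, 1 ≤ t j ∧ t j < n) :
    σ (prodXv k n a t) = prodXv k N a (fun j => t j + 1) := by
  rw [prodXv, map_prod]
  exact prod_congr rfl fun j hj => hσ _ (ht j (mem_range.1 hj)).1 (ht j (mem_range.1 hj)).2

lemma map_idealI_eq_idealI_add_one
    (hσ : ∀ t, 1 ≤ t → t < n → σ (Xv k n t) = Xv k N (t + 1)) (a : ℕ) :
    Ideal.map σ (idealI k n a 1 (n - 1)) = idealI k N a 2 n := by
  refine le_antisymm ?_ ?_
  · rw [Ideal.map_le_iff_le_comap, idealI_le_iff]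
    intro t ht
    have hn := ht.le
    rw [Ideal.mem_comap, map_prodXv hσ fun j hj => by obtain ⟨_, _⟩ := ht.mem_Icc hj; omega]
    exact prodXv_mem_idealI (ht.add_one.mono le_rfl (by omega))
  · rw [idealI_le_iff]
    intro t ht
    have hn := ht.le
    have hpred : IsSparseSeq a 1 (n - 1) (fun j => t j - 1) :=
      (ht.mono (p' := 1 + 1) (q' := n - 1 + 1) le_rfl (by omega)).sub_one
    have hσt : σ (prodXv k n a (fun j => t j - 1)) = prodXv k N a t := by
      rw [map_prodXv hσ fun j hj => by obtain ⟨_, _⟩ := hpred.mem_Icc hj; omega]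
      exact prodXv_congr fun j hj => by obtain ⟨_, _⟩ := ht.mem_Icc hj; omega
    rw [← hσt]
    exact Ideal.mem_map_of_mem σ (prodXv_mem_idealI hpred)

variable {z : MvPolynomial (Fin N) k}

lemma map_idealI_le_idealI_sup_span_singleton_mul
    (hσ : ∀ t, 1 ≤ t → t < n → σ (Xv k n t) = Xv k N (t + 1))
    (hσz : σ (Xv k n n) = z) {a : ℕ} (ha : 2 ≤ a) :
    Ideal.map σ (idealI k n a 2 n) ≤
      idealI k N a 2 n ⊔ Ideal.span {z} * idealI k N (a - 1) 3 (n - 1) := by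
  obtain ⟨b, rfl⟩ : ∃ b, a = b + 1 := ⟨a - 1, by omega⟩
  rw [Nat.add_sub_cancel, Ideal.map_le_iff_le_comap, idealI_le_iff]
  intro t ht
  have hn := ht.le
  rw [Ideal.mem_comap]
  by_cases hlast : t b = n
  · have hinit := ht.of_succ (by omega)
    rw [prodXv_succ, map_mul, hlast, hσz,
      map_prodXv hσ fun j hj => by obtain ⟨_, _⟩ := hinit.mem_Icc hj; omega]
    exact Ideal.mem_sup_right (Ideal.mul_mem_mul_rev (Ideal.mem_span_singleton_self z)
      (prodXv_mem_idealI (hinit.add_one.mono le_rfl (by omega))))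
  · have hlt : IsSparseSeq (b + 1) 2 (n - 1) t :=
      ⟨ht.1, by have := ht.2.1; simp only [Nat.add_sub_cancel] at this ⊢; omega, ht.2.2⟩
    rw [map_prodXv hσ fun j hj => by obtain ⟨_, _⟩ := hlt.mem_Icc hj; omega]
    exact Ideal.mem_sup_left (prodXv_mem_idealI (hlt.add_one.mono (by omega) (by omega)))

lemma span_singleton_mul_idealI_le_map
    (hσ : ∀ t, 1 ≤ t → t < n → σ (Xv k n t) = Xv k N (t + 1))
    (hσz : σ (Xv k n n) = z) {a : ℕ} (ha : 2 ≤ a) :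
    Ideal.span {z} * idealI k N (a - 1) 3 (n - 1) ≤ Ideal.map σ (idealI k n a 2 n) := by
  obtain ⟨b, rfl⟩ : ∃ b, a = b + 1 := ⟨a - 1, by omega⟩
  rw [Nat.add_sub_cancel, Ideal.span_singleton_mul_le_iff]
  intro f hf
  rw [mul_comm, ← smul_eq_mul, ← Submodule.mem_colon_singleton]
  refine idealI_le_iff.2 (fun s hs => ?_) hf
  rw [Submodule.mem_colon_singleton, smul_eq_mul, mul_comm]
  obtain ⟨hs0, hs0'⟩ := hs.mem_Icc (j := 0) (by omega)
  have hpred : IsSparseSeq b 2 (n - 2) (fun j => s j - 1) :=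
    (hs.mono (p' := 2 + 1) (q' := n - 2 + 1) le_rfl (by omega)).sub_one
  -- append the index `n`, i.e. the variable that `σ` sends to `z`
  have hu := hpred.update (by omega) (r := n) (by omega)
  have hσu : σ (prodXv k n (b + 1) (Function.update (fun j => s j - 1) b n)) =
      z * prodXv k N b s := by
    rw [prodXv_succ, Function.update_self, map_mul, hσz, mul_comm,
      prodXv_congr fun j hj => Function.update_of_ne (Nat.ne_of_lt hj) _ _,
      map_prodXv hσ fun j hj => by obtain ⟨_, _⟩ := hpred.mem_Icc hj; omega]
    congr 1
    exact prodXv_congr fun j hj => by obtain ⟨_, _⟩ := hs.mem_Icc hj; omega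
  rw [← hσu]
  exact Ideal.mem_map_of_mem σ (prodXv_mem_idealI hu)

theorem map_idealI_sup_idealI_eq
    (hσ : ∀ t, 1 ≤ t → t < n → σ (Xv k n t) = Xv k N (t + 1))
    (hσz : σ (Xv k n n) = z) {a : ℕ} (ha : 2 ≤ a) :
    Ideal.map σ (idealI k n a 1 (n - 1) ⊔ idealI k n a 2 n) =
      idealI k N a 2 n ⊔ Ideal.span {z} * idealI k N (a - 1) 3 (n - 1) := by
  rw [Ideal.map_sup, map_idealI_eq_idealI_add_one hσ]
  exact le_antisymm
    (sup_le le_sup_left (map_idealI_le_idealI_sup_span_singleton_mul hσ hσz ha))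
    (sup_le_sup_left (span_singleton_mul_idealI_le_map hσ hσz ha) _)

end Shift

end Monomials

theorem unprojection_ideal_is_shifted_SR_general (k : Type*) [Field k] (d m : ℕ)
    (hd4 : 4 ≤ d) (hm : d + 1 < m) (a : ℕ) (ha : a = (d + 2) / 2)
    (σ : MvPolynomial (Fin (m - 1)) k →ₐ[k] MvPolynomial (Fin (m + 1)) k)
    (hσ : σ = MvPolynomial.aeval (fun i : Fin (m - 1) =>
      if (i : ℕ) = m - 2 then Xv k (m + 1) (m + 1) else Xv k (m + 1) ((i : ℕ) + 2))) :
    Ideal.map σ (idealI k (m - 1) (a - 1) 1 (m - 2) + idealI k (m - 1) (a - 1) 2 (m - 1)) =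
      idealI k (m + 1) (a - 1) 2 (m - 1) +
        Ideal.span {Xv k (m + 1) (m + 1)} * idealI k (m + 1) (a - 2) 3 (m - 2) := by
  have hshift : ∀ t, 1 ≤ t → t < m - 1 → σ (Xv k (m - 1) t) = Xv k (m + 1) (t + 1) := by
    intro t h1 h2
    rw [hσ, Xv_eq_X (n := m - 1) h1 h2.le, aeval_X, if_neg (show ¬t - 1 = m - 2 by omega)]
    congr 1
    show t - 1 + 2 = t + 1
    omega
  have hlast : σ (Xv k (m - 1) (m - 1)) = Xv k (m + 1) (m + 1) := by
    rw [hσ, Xv_eq_X (n := m - 1) (by omega) le_rfl, aeval_X,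
      if_pos (show m - 1 - 1 = m - 2 by omega)]
  rw [show m - 2 = m - 1 - 1 by omega, show a - 2 = a - 1 - 1 by omega, Ideal.add_eq_sup,
    Ideal.add_eq_sup]
  exact map_idealI_sup_idealI_eq hshift hlast (by omega)

/-- For `d ≥ 4` even, `d + 1 < m`, `a = (d+2)/2`: let
`σ : k[x_1,…,x_{m−1}] → k[x_1,…,x_m,z]` be the `k`-algebra homomorphism with
`σ(x_i) = x_{i+1}` for `1 ≤ i ≤ m−2` and `σ(x_{m−1}) = z` (here `z` is the last variable of
`k[x_1,…,x_m,z]`). Then the ideal generated by the image under `σ` of the Stanley–Reisner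
ideal `I_{a−1,1,m−2} + I_{a−1,2,m−1}` of `Δ(d−2,m−1)` equals the unprojection ideal
`J_{d,m} = I_{a−1,2,m−1} + z·I_{a−2,3,m−2}`. -/
theorem unprojection_ideal_is_shifted_SR (k : Type*) [Field k] (d m : ℕ)
    (hd : Even d) (hd4 : 4 ≤ d) (hm : d + 1 < m) (a : ℕ) (ha : a = (d + 2) / 2)
    (σ : MvPolynomial (Fin (m - 1)) k →ₐ[k] MvPolynomial (Fin (m + 1)) k)
    (hσ : σ = MvPolynomial.aeval (fun i : Fin (m - 1) =>
      if (i : ℕ) = m - 2 then Xv k (m + 1) (m + 1) else Xv k (m + 1) ((i : ℕ) + 2))) :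
    Ideal.map σ (idealI k (m - 1) (a - 1) 1 (m - 2) + idealI k (m - 1) (a - 1) 2 (m - 1)) =
      idealI k (m + 1) (a - 1) 2 (m - 1) +
        Ideal.span {Xv k (m + 1) (m + 1)} * idealI k (m + 1) (a - 2) 3 (m - 2) :=
  unprojection_ideal_is_shifted_SR_general k d m hd4 hm a ha σ hσ
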